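/- arXiv:1903.12518 — 6 statements merged into one kernel-verified Lean document; each statement's English description precedes it below -/
import Mathlib

section
/- Let (A,X,I) be a polarity and R ⊆ A×X a relation. Then: (1) the following are equivalent: (i) R^{(0)}[{x}] is Galois-stable for every x ∈ X; (ii) R^{(0)}[Y] is Galois-stable for every Y ⊆ X; (iii) R^{(1)}[B] = R^{(1)}[(B^↑)^↓] for every B ⊆ A. (2) The following are equivalent: (i) R^{(1)}[{a}] is Galois-stable for every a ∈ A; (ii) R^{(1)}[B] is Galois-stable for every B ⊆ A; (iii) R^{(0)}[Y] = R^{(0)}[(Y^↓)^↑] for every Y ⊆ X. -/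
/-- `B^↑ = {x ∈ X | ∀ a ∈ B, a I x}`. -/
def up {A X : Type*} (I : A → X → Prop) (B : Set A) : Set X := {x | ∀ a ∈ B, I a x}

/-- `Y^↓ = {a ∈ A | ∀ x ∈ Y, a I x}`. -/
def down {A X : Type*} (I : A → X → Prop) (Y : Set X) : Set A := {a | ∀ x ∈ Y, I a x}

/-- `R^{(1)}[B] = {x ∈ X | ∀ a ∈ B, a R x}`. -/
def rOneP {A X : Type*} (R : A → X → Prop) (B : Set A) : Set X := {x | ∀ a ∈ B, R a x}

/-- `R^{(0)}[Y] = {a ∈ A | ∀ x ∈ Y, a R x}`. -/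
def rZeroP {A X : Type*} (R : A → X → Prop) (Y : Set X) : Set A := {a | ∀ x ∈ Y, R a x}

lemma part1 {A X : Type*} (I : A → X → Prop) (R : A → X → Prop) :
    ((∀ x : X, down I (up I (rZeroP R {x})) = rZeroP R {x}) ↔
        (∀ Y : Set X, down I (up I (rZeroP R Y)) = rZeroP R Y)) ∧
      ((∀ x : X, down I (up I (rZeroP R {x})) = rZeroP R {x}) ↔
        (∀ B : Set A, rOneP R B = rOneP R (down I (up I B)))) := by
  have sub : ∀ B : Set A, B ⊆ down I (up I B) := by
    intro B a ha x hx; exact hx a ha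
  have mono : ∀ B C : Set A, B ⊆ C → down I (up I B) ⊆ down I (up I C) := by
    intro B C h a ha x hx
    exact ha x (fun b hb => hx b (h hb))
  have i_iii : (∀ x : X, down I (up I (rZeroP R {x})) = rZeroP R {x}) →
      (∀ B : Set A, rOneP R B = rOneP R (down I (up I B))) := by
    intro hi B
    apply Set.Subset.antisymm
    · intro x hx a ha
      have hB : B ⊆ rZeroP R {x} := by
        intro b hb y hy; cases hy; exact hx b hb
      have := mono _ _ hB ha
      rw [hi x] at this
      exact this x rfl
    · intro x hx a ha
      exact hx a (sub B ha)
  have iii_ii : (∀ B : Set A, rOneP R B = rOneP R (down I (up I B))) →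
      (∀ Y : Set X, down I (up I (rZeroP R Y)) = rZeroP R Y) := by
    intro hiii Y
    apply Set.Subset.antisymm
    · intro a ha x hx
      have hx1 : x ∈ rOneP R (rZeroP R Y) := fun b hb => hb x hx
      rw [hiii (rZeroP R Y)] at hx1
      exact hx1 a ha
    · exact sub _
  have ii_i : (∀ Y : Set X, down I (up I (rZeroP R Y)) = rZeroP R Y) →
      (∀ x : X, down I (up I (rZeroP R {x})) = rZeroP R {x}) := fun h x => h {x}
  exact ⟨⟨fun h => iii_ii (i_iii h), ii_i⟩, ⟨i_iii, fun h => ii_i (iii_ii h)⟩⟩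

theorem stmt0 {A X : Type*} (I : A → X → Prop) (R : A → X → Prop) :
    -- (1): (i) ↔ (ii) and (i) ↔ (iii)
    (((∀ x : X, down I (up I (rZeroP R {x})) = rZeroP R {x}) ↔
        (∀ Y : Set X, down I (up I (rZeroP R Y)) = rZeroP R Y)) ∧
      ((∀ x : X, down I (up I (rZeroP R {x})) = rZeroP R {x}) ↔
        (∀ B : Set A, rOneP R B = rOneP R (down I (up I B))))) ∧
    -- (2): (i) ↔ (ii) and (i) ↔ (iii)
    (((∀ a : A, up I (down I (rOneP R {a})) = rOneP R {a}) ↔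
        (∀ B : Set A, up I (down I (rOneP R B)) = rOneP R B)) ∧
      ((∀ a : A, up I (down I (rOneP R {a})) = rOneP R {a}) ↔
        (∀ Y : Set X, rZeroP R Y = rZeroP R (up I (down I Y))))) :=
  ⟨part1 I R, part1 (fun x a => I a x) (fun x a => R a x)⟩
end

section
/- Let (Z,E) be a reflexive graph and R ⊆ Z×Z. Then: (1) the following are equivalent: (i) (R^{[0]}[{y}])^{[10]} ⊆ R^{[0]}[{y}] for every y ∈ Z; (ii) (R^{[0]}[Y])^{[10]} ⊆ R^{[0]}[Y] for every Y ⊆ Z; (iii) R^{[1]}[B] = R^{[1]}[B^{[10]}] for every B ⊆ Z. (2) The following are equivalent: (i) (R^{[1]}[{b}])^{[01]} ⊆ R^{[1]}[{b}] for every b ∈ Z; (ii) (R^{[1]}[B])^{[01]} ⊆ R^{[1]}[B] for every B ⊆ Z; (iii) R^{[0]}[Y] = R^{[0]}[Y^{[01]}] for every Y ⊆ Z. -/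
/-- `T^{[1]}[U] = {v ∈ Z | ∀ u ∈ U, ¬ (u T v)}`. -/
def rOne {Z : Type*} (T : Z → Z → Prop) (U : Set Z) : Set Z := {v | ∀ u ∈ U, ¬ T u v}

/-- `T^{[0]}[V] = {u ∈ Z | ∀ v ∈ V, ¬ (u T v)}`. -/
def rZero {Z : Type*} (T : Z → Z → Prop) (V : Set Z) : Set Z := {u | ∀ v ∈ V, ¬ T u v}

/-- `R` is `E`-compatible: for all `b, y`,
`(R^{[0]}[{y}])^{[10]} ⊆ R^{[0]}[{y}]` and `(R^{[1]}[{b}])^{[01]} ⊆ R^{[1]}[{b}]`. -/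
def ECompat {Z : Type*} (E R : Z → Z → Prop) : Prop :=
  (∀ y : Z, rZero E (rOne E (rZero R {y})) ⊆ rZero R {y}) ∧
  (∀ b : Z, rOne E (rZero E (rOne R {b})) ⊆ rOne R {b})

lemma rOne_anti {Z : Type*} {T : Z → Z → Prop} {B C : Set Z} (h : B ⊆ C) :
    rOne T C ⊆ rOne T B := fun _ hv u hu => hv u (h hu)

lemma rZero_anti {Z : Type*} {T : Z → Z → Prop} {B C : Set Z} (h : B ⊆ C) :
    rZero T C ⊆ rZero T B := fun _ hv u hu => hv u (h hu)

lemma sub10 {Z : Type*} {E : Z → Z → Prop} {B : Set Z} :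
    B ⊆ rZero E (rOne E B) := fun x hx _ hv => hv x hx

lemma aux {Z : Type*} (E : Z → Z → Prop) (R : Z → Z → Prop) :
    ((∀ y : Z, rZero E (rOne E (rZero R {y})) ⊆ rZero R {y}) ↔
        (∀ Y : Set Z, rZero E (rOne E (rZero R Y)) ⊆ rZero R Y)) ∧
      ((∀ y : Z, rZero E (rOne E (rZero R {y})) ⊆ rZero R {y}) ↔
        (∀ B : Set Z, rOne R B = rOne R (rZero E (rOne E B)))) := by
  constructor
  · constructor
    · intro h Y x hx y hy
      have h1 : rZero R Y ⊆ rZero R {y} :=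
        rZero_anti (by simpa using hy : ({y} : Set Z) ⊆ Y)
      exact h y (rZero_anti (rOne_anti h1) hx) y rfl
    · intro h y x hx
      exact h {y} hx
  · constructor
    · intro h B
      apply Set.Subset.antisymm
      · intro v hv x hx
        have hB : B ⊆ rZero R {v} := fun b hb w hw => hw ▸ hv b hb
        exact h v (rZero_anti (rOne_anti hB) hx) v rfl
      · exact rOne_anti sub10
    · intro h y x hx v hv
      have hy : y ∈ rOne R (rZero R {y}) := fun u hu => hu y rfl
      rw [h (rZero R {y})] at hy
      cases hv
      exact hy x hx

theorem stmt1 {Z : Type*} [Nonempty Z] (E : Z → Z → Prop) (hrefl : ∀ z : Z, E z z)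
    (R : Z → Z → Prop) :
    -- (1): (i) ↔ (ii) and (i) ↔ (iii)
    (((∀ y : Z, rZero E (rOne E (rZero R {y})) ⊆ rZero R {y}) ↔
        (∀ Y : Set Z, rZero E (rOne E (rZero R Y)) ⊆ rZero R Y)) ∧
      ((∀ y : Z, rZero E (rOne E (rZero R {y})) ⊆ rZero R {y}) ↔
        (∀ B : Set Z, rOne R B = rOne R (rZero E (rOne E B))))) ∧
    -- (2): (i) ↔ (ii) and (i) ↔ (iii)
    (((∀ b : Z, rOne E (rZero E (rOne R {b})) ⊆ rOne R {b}) ↔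
        (∀ B : Set Z, rOne E (rZero E (rOne R B)) ⊆ rOne R B)) ∧
      ((∀ b : Z, rOne E (rZero E (rOne R {b})) ⊆ rOne R {b}) ↔
        (∀ Y : Set Z, rZero R Y = rZero R (rOne E (rZero E Y))))) :=
  ⟨aux E R, aux (fun a b => E b a) (fun a b => R b a)⟩
end

section
/- Let L be an L-algebra, F a filter of L and J an ideal of L. Then: (1) F ∩ {□u | u ∈ J} ≠ ∅ if and only if F ∩ ⌈{□u | u ∈ J}⌉ ≠ ∅, where ⌈S⌉ denotes the ideal of L generated by S; (2) {◇v | v ∈ F} ∩ J ≠ ∅ if and only if ⌊{◇v | v ∈ F}⌋ ∩ J ≠ ∅, where ⌊S⌋ denotes the filter of L generated by S. -/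
/-- A filter: a nonempty, upward-closed subset closed under binary meets. -/
def IsFilt {L : Type*} [Lattice L] (F : Set L) : Prop :=
  F.Nonempty ∧ (∀ a b : L, a ∈ F → a ≤ b → b ∈ F) ∧ (∀ a b : L, a ∈ F → b ∈ F → a ⊓ b ∈ F)

/-- An ideal: a nonempty, downward-closed subset closed under binary joins. -/
def IsIdl {L : Type*} [Lattice L] (J : Set L) : Prop :=
  J.Nonempty ∧ (∀ a b : L, a ∈ J → b ≤ a → b ∈ J) ∧ (∀ a b : L, a ∈ J → b ∈ J → a ⊔ b ∈ J)

/-- `⌈S⌉`: the ideal of `L` generated by `S` (the smallest ideal including `S`). -/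
def idealGen {L : Type*} [Lattice L] (S : Set L) : Set L :=
  ⋂₀ {J : Set L | IsIdl J ∧ S ⊆ J}

/-- `⌊S⌋`: the filter of `L` generated by `S` (the smallest filter including `S`). -/
def filterGen {L : Type*} [Lattice L] (S : Set L) : Set L :=
  ⋂₀ {F : Set L | IsFilt F ∧ S ⊆ F}

theorem stmt4 {L : Type*} [Lattice L] [BoundedOrder L] (bx dm : L → L)
    (hb1 : bx ⊤ = ⊤) (hb2 : ∀ a b : L, bx (a ⊓ b) = bx a ⊓ bx b)
    (hd1 : dm ⊥ = ⊥) (hd2 : ∀ a b : L, dm (a ⊔ b) = dm a ⊔ dm b)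
    (F J : Set L) (hF : IsFilt F) (hJ : IsIdl J) :
    ((F ∩ bx '' J).Nonempty ↔ (F ∩ idealGen (bx '' J)).Nonempty) ∧
    ((dm '' F ∩ J).Nonempty ↔ (filterGen (dm '' F) ∩ J).Nonempty) := by
  obtain ⟨hFne, hFup, hFmeet⟩ := hF
  obtain ⟨hJne, hJdn, hJjoin⟩ := hJ
  have bmono : ∀ a b : L, a ≤ b → bx a ≤ bx b := by
    intro a b hab
    have : bx (a ⊓ b) = bx a ⊓ bx b := hb2 a b
    rw [inf_eq_left.mpr hab] at this
    exact le_of_eq_of_le this inf_le_right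
  have dmono : ∀ a b : L, a ≤ b → dm a ≤ dm b := by
    intro a b hab
    have : dm (a ⊔ b) = dm a ⊔ dm b := hd2 a b
    rw [sup_eq_right.mpr hab] at this
    exact le_of_le_of_eq le_sup_left this.symm
  constructor
  · constructor
    · rintro ⟨x, hxF, hxS⟩
      exact ⟨x, hxF, fun T hT => hT.2 hxS⟩
    · rintro ⟨x, hxF, hxI⟩
      -- D = {x | ∃ u ∈ J, x ≤ bx u} is an ideal containing bx '' J
      have hD : x ∈ {y : L | ∃ u ∈ J, y ≤ bx u} := by
        apply hxI
        refine ⟨⟨?_, ?_, ?_⟩, ?_⟩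
        · obtain ⟨u, hu⟩ := hJne
          exact ⟨bx u, u, hu, le_rfl⟩
        · rintro a b ⟨u, huJ, hau⟩ hba
          exact ⟨u, huJ, hba.trans hau⟩
        · rintro a b ⟨u, huJ, hau⟩ ⟨v, hvJ, hbv⟩
          refine ⟨u ⊔ v, hJjoin u v huJ hvJ, sup_le ?_ ?_⟩
          · exact hau.trans (bmono u (u ⊔ v) le_sup_left)
          · exact hbv.trans (bmono v (u ⊔ v) le_sup_right)
        · rintro y ⟨u, huJ, rfl⟩
          exact ⟨u, huJ, le_rfl⟩
      obtain ⟨u, huJ, hxu⟩ := hD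
      exact ⟨bx u, hFup x (bx u) hxF hxu, u, huJ, rfl⟩
  · constructor
    · rintro ⟨x, hxS, hxJ⟩
      exact ⟨x, fun T hT => hT.2 hxS, hxJ⟩
    · rintro ⟨x, hxG, hxJ⟩
      have hU : x ∈ {y : L | ∃ v ∈ F, dm v ≤ y} := by
        apply hxG
        refine ⟨⟨?_, ?_, ?_⟩, ?_⟩
        · obtain ⟨v, hv⟩ := hFne
          exact ⟨dm v, v, hv, le_rfl⟩
        · rintro a b ⟨v, hvF, hva⟩ hab
          exact ⟨v, hvF, hva.trans hab⟩
        · rintro a b ⟨v, hvF, hva⟩ ⟨w, hwF, hwb⟩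
          refine ⟨v ⊓ w, hFmeet v w hvF hwF, le_inf ?_ ?_⟩
          · exact (dmono (v ⊓ w) v inf_le_left).trans hva
          · exact (dmono (v ⊓ w) w inf_le_right).trans hwb
        · rintro y ⟨v, hvF, rfl⟩
          exact ⟨v, hvF, le_rfl⟩
      obtain ⟨v, hvF, hvx⟩ := hU
      exact ⟨dm v, ⟨v, hvF, rfl⟩, hJdn x (dm v) hxJ hvx⟩
end

section
/- Truth lemma for the canonical model: let A_L be the Lindenbaum–Tarski algebra of the basic logic L, and let M_L be the canonical graph-based model based on the frame associated with A_L, with valuation V(p) = ({z | [p] ∈ F_z}, {z | [p] ∈ J_z}). Then for every formula φ and every state z of M_L: (1) M_L, z ⊩ φ if and only if [φ] ∈ F_z; (2) M_L, z ≻ φ if and only if [φ] ∈ J_z. -/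
/-- A concept of the graph `(Z,E)`: a pair `(B,Y)` with `Y = B^{[1]}` and `B = Y^{[0]}`. -/
def isConcept {Z : Type*} (E : Z → Z → Prop) (c : Set Z × Set Z) : Prop :=
  c.2 = rOne E c.1 ∧ c.1 = rZero E c.2

/-- `[R](B,Y) = (R^{[0]}[Y], (R^{[0]}[Y])^{[1]})`. -/
def boxMap {Z : Type*} (E R : Z → Z → Prop) (c : Set Z × Set Z) : Set Z × Set Z :=
  (rZero R c.2, rOne E (rZero R c.2))

/-- `⟨R⟩(B,Y) = ((R^{[0]}[B])^{[0]}, R^{[0]}[B])`. -/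
def diaMap {Z : Type*} (E R : Z → Z → Prop) (c : Set Z × Set Z) : Set Z × Set Z :=
  (rZero E (rZero R c.1), rZero R c.1)

/-- Formulas of the basic normal non-distributive modal language `L`. -/
inductive Fm : Type
  | bot : Fm
  | top : Fm
  | var : ℕ → Fm
  | conj : Fm → Fm → Fm
  | disj : Fm → Fm → Fm
  | box : Fm → Fm
  | dia : Fm → Fm

/-- Satisfaction (`.1`) and co-satisfaction/refutation (`.2`) at states, defined by
simultaneous recursion on the formula. -/
def sat {Z : Type*} (E Rb Rd : Z → Z → Prop) (V : ℕ → Set Z × Set Z) :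
    Fm → (Z → Prop) × (Z → Prop)
  | .bot => (fun _ => False, fun _ => True)
  | .top => (fun _ => True, fun _ => False)
  | .var n => (fun z => z ∈ (V n).1, fun z => ∀ z', E z' z → z' ∉ (V n).1)
  | .conj φ ψ =>
      (fun z => (sat E Rb Rd V φ).1 z ∧ (sat E Rb Rd V ψ).1 z,
       fun z => ∀ z', E z' z → ¬ ((sat E Rb Rd V φ).1 z' ∧ (sat E Rb Rd V ψ).1 z'))
  | .disj φ ψ =>
      (fun z => ∀ z', E z z' → ¬ ((sat E Rb Rd V φ).2 z' ∧ (sat E Rb Rd V ψ).2 z'),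
       fun z => (sat E Rb Rd V φ).2 z ∧ (sat E Rb Rd V ψ).2 z)
  | .box φ =>
      (fun z => ∀ z', Rb z z' → ¬ (sat E Rb Rd V φ).2 z',
       fun z => ∀ z', E z' z → ¬ (∀ z'', Rb z' z'' → ¬ (sat E Rb Rd V φ).2 z''))
  | .dia φ =>
      (fun z => ∀ z', E z z' → ¬ (∀ z'', Rd z' z'' → ¬ (sat E Rb Rd V φ).1 z''),
       fun z => ∀ z', Rd z z' → ¬ (sat E Rb Rd V φ).1 z')

/-- A graph-based `L`-frame: a reflexive graph `(Z,E)` with `E`-compatible `R_□`, `R_◇`. -/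
structure GFrame (Z : Type*) where
  E : Z → Z → Prop
  Rb : Z → Z → Prop
  Rd : Z → Z → Prop
  nonempty : Nonempty Z
  refl : ∀ z : Z, E z z
  compatB : ECompat E Rb
  compatD : ECompat E Rd

/-- The sequent `φ ⊢ ψ` is true in the model `(F, V)`. -/
def trueIn {Z : Type*} (F : GFrame Z) (V : ℕ → Set Z × Set Z) (φ ψ : Fm) : Prop :=
  ∀ z z' : Z, (sat F.E F.Rb F.Rd V φ).1 z → (sat F.E F.Rb F.Rd V ψ).2 z' → ¬ F.E z z'

/-- The sequent `φ ⊢ ψ` is valid in the frame `F`: true in every model based on `F`,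
i.e. for every valuation sending proposition letters to concepts. -/
def validIn {Z : Type*} (F : GFrame Z) (φ ψ : Fm) : Prop :=
  ∀ V : ℕ → Set Z × Set Z, (∀ n, isConcept F.E (V n)) → trueIn F V φ ψ

/-- Substitution of `χ` for the variable `p`: `φ(χ/p)`. -/
def sub1 (p : ℕ) (χ : Fm) : Fm → Fm
  | .bot => .bot
  | .top => .top
  | .var n => if n = p then χ else .var n
  | .conj φ ψ => .conj (sub1 p χ φ) (sub1 p χ ψ)
  | .disj φ ψ => .disj (sub1 p χ φ) (sub1 p χ ψ)
  | .box φ => .box (sub1 p χ φ)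
  | .dia φ => .dia (sub1 p χ φ)

/-- Derivability of sequents in the basic logic `L`. -/
inductive Deriv : Fm → Fm → Prop
  | axId : Deriv (.var 0) (.var 0)
  | axBot : Deriv .bot (.var 0)
  | axTop : Deriv (.var 0) .top
  | axOr1 : Deriv (.var 0) (.disj (.var 0) (.var 1))
  | axOr2 : Deriv (.var 1) (.disj (.var 0) (.var 1))
  | axAnd1 : Deriv (.conj (.var 0) (.var 1)) (.var 0)
  | axAnd2 : Deriv (.conj (.var 0) (.var 1)) (.var 1)
  | axBoxTop : Deriv .top (.box .top)
  | axBoxAnd : Deriv (.conj (.box (.var 0)) (.box (.var 1))) (.box (.conj (.var 0) (.var 1)))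
  | axDiaBot : Deriv (.dia .bot) .bot
  | axDiaOr : Deriv (.disj (.dia (.var 0)) (.dia (.var 1))) (.dia (.disj (.var 0) (.var 1)))
  | cut {φ χ ψ : Fm} : Deriv φ χ → Deriv χ ψ → Deriv φ ψ
  | subst (p : ℕ) (χ : Fm) {φ ψ : Fm} : Deriv φ ψ → Deriv (sub1 p χ φ) (sub1 p χ ψ)
  | andIntro {χ φ ψ : Fm} : Deriv χ φ → Deriv χ ψ → Deriv χ (.conj φ ψ)
  | orElim {φ ψ χ : Fm} : Deriv φ χ → Deriv ψ χ → Deriv (.disj φ ψ) χ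
  | monoBox {φ ψ : Fm} : Deriv φ ψ → Deriv (.box φ) (.box ψ)
  | monoDia {φ ψ : Fm} : Deriv φ ψ → Deriv (.dia φ) (.dia ψ)

/-- The largest variable index occurring in a formula (0 if none). -/
def maxVar : Fm → ℕ
  | .bot => 0
  | .top => 0
  | .var n => n
  | .conj φ ψ => max (maxVar φ) (maxVar ψ)
  | .disj φ ψ => max (maxVar φ) (maxVar ψ)
  | .box φ => maxVar φ
  | .dia φ => maxVar φ

theorem sub1_fresh {m : ℕ} {φ : Fm} (h : maxVar φ < m) (χ : Fm) : sub1 m χ φ = φ := by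
  induction φ with
  | bot => rfl
  | top => rfl
  | var n => simp only [maxVar] at h; simp [sub1, Nat.ne_of_lt h]
  | conj φ ψ ihφ ihψ =>
      simp only [maxVar, max_lt_iff] at h
      simp [sub1, ihφ h.1, ihψ h.2]
  | disj φ ψ ihφ ihψ =>
      simp only [maxVar, max_lt_iff] at h
      simp [sub1, ihφ h.1, ihψ h.2]
  | box φ ih => simp only [maxVar] at h; simp [sub1, ih h]
  | dia φ ih => simp only [maxVar] at h; simp [sub1, ih h]

theorem derivRefl (φ : Fm) : Deriv φ φ := by
  simpa [sub1] using Deriv.subst 0 φ Deriv.axId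

theorem derivProj1 (φ ψ : Fm) : Deriv (.conj φ ψ) φ := by
  have h1 := Deriv.subst 1 (.var (maxVar φ + 1)) Deriv.axAnd1
  have h2 := Deriv.subst 0 φ h1
  have h3 := Deriv.subst (maxVar φ + 1) ψ h2
  simpa [sub1, sub1_fresh (Nat.lt_succ_self (maxVar φ))] using h3

theorem derivProj2 (φ ψ : Fm) : Deriv (.conj φ ψ) ψ := by
  have h1 := Deriv.subst 0 (.var (maxVar ψ + 2)) Deriv.axAnd2
  have h2 := Deriv.subst 1 ψ h1
  have h3 := Deriv.subst (maxVar ψ + 2) φ h2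
  have hfr : maxVar ψ < maxVar ψ + 2 := by omega
  simpa [sub1, sub1_fresh hfr] using h3

theorem derivInj1 (φ ψ : Fm) : Deriv φ (.disj φ ψ) := by
  have h1 := Deriv.subst 1 (.var (maxVar φ + 1)) Deriv.axOr1
  have h2 := Deriv.subst 0 φ h1
  have h3 := Deriv.subst (maxVar φ + 1) ψ h2
  simpa [sub1, sub1_fresh (Nat.lt_succ_self (maxVar φ))] using h3

theorem derivInj2 (φ ψ : Fm) : Deriv ψ (.disj φ ψ) := by
  have h1 := Deriv.subst 0 (.var (maxVar ψ + 2)) Deriv.axOr2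
  have h2 := Deriv.subst 1 ψ h1
  have h3 := Deriv.subst (maxVar ψ + 2) φ h2
  have hfr : maxVar ψ < maxVar ψ + 2 := by omega
  simpa [sub1, sub1_fresh hfr] using h3

/-- Interderivability, the congruence by which the Lindenbaum–Tarski algebra is built. -/
instance fmSetoid : Setoid Fm :=
  ⟨fun φ ψ => Deriv φ ψ ∧ Deriv ψ φ,
   ⟨fun φ => ⟨derivRefl φ, derivRefl φ⟩,
    fun h => ⟨h.2, h.1⟩,
    fun h h' => ⟨Deriv.cut h.1 h'.1, Deriv.cut h'.2 h.2⟩⟩⟩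

/-- The Lindenbaum–Tarski algebra of the basic logic `L`. -/
def LindTarski : Type := Quotient fmSetoid

/-- The lattice order of `A_L`: `[φ] ≤ [ψ]` iff `φ ⊢ ψ` is derivable. -/
def leLT : LindTarski → LindTarski → Prop :=
  Quotient.lift₂ Deriv (by
    intro a b a' b' ha hb
    have ha' : Deriv a a' ∧ Deriv a' a := ha
    have hb' : Deriv b b' ∧ Deriv b' b := hb
    exact propext ⟨fun h => Deriv.cut ha'.2 (Deriv.cut h hb'.1),
                   fun h => Deriv.cut ha'.1 (Deriv.cut h hb'.2)⟩)

/-- Meet on `A_L`, induced by `∧`. -/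
def meetLT : LindTarski → LindTarski → LindTarski :=
  Quotient.map₂ Fm.conj (by
    intro a a' ha b b' hb
    have ha' : Deriv a a' ∧ Deriv a' a := ha
    have hb' : Deriv b b' ∧ Deriv b' b := hb
    exact show Deriv (.conj a b) (.conj a' b') ∧ Deriv (.conj a' b') (.conj a b) from
      ⟨Deriv.andIntro (Deriv.cut (derivProj1 a b) ha'.1) (Deriv.cut (derivProj2 a b) hb'.1),
       Deriv.andIntro (Deriv.cut (derivProj1 a' b') ha'.2) (Deriv.cut (derivProj2 a' b') hb'.2)⟩)

/-- Join on `A_L`, induced by `∨`. -/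
def joinLT : LindTarski → LindTarski → LindTarski :=
  Quotient.map₂ Fm.disj (by
    intro a a' ha b b' hb
    have ha' : Deriv a a' ∧ Deriv a' a := ha
    have hb' : Deriv b b' ∧ Deriv b' b := hb
    exact show Deriv (.disj a b) (.disj a' b') ∧ Deriv (.disj a' b') (.disj a b) from
      ⟨Deriv.orElim (Deriv.cut ha'.1 (derivInj1 a' b')) (Deriv.cut hb'.1 (derivInj2 a' b')),
       Deriv.orElim (Deriv.cut ha'.2 (derivInj1 a b)) (Deriv.cut hb'.2 (derivInj2 a b))⟩)

/-- `□` on `A_L`. -/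
def boxLT : LindTarski → LindTarski :=
  Quotient.map Fm.box (by
    intro a a' ha
    have ha' : Deriv a a' ∧ Deriv a' a := ha
    exact show Deriv (.box a) (.box a') ∧ Deriv (.box a') (.box a) from
      ⟨Deriv.monoBox ha'.1, Deriv.monoBox ha'.2⟩)

/-- `◇` on `A_L`. -/
def diaLT : LindTarski → LindTarski :=
  Quotient.map Fm.dia (by
    intro a a' ha
    have ha' : Deriv a a' ∧ Deriv a' a := ha
    exact show Deriv (.dia a) (.dia a') ∧ Deriv (.dia a') (.dia a) from
      ⟨Deriv.monoDia ha'.1, Deriv.monoDia ha'.2⟩)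

/-- A filter of `A_L`: nonempty, upward closed, closed under binary meets. -/
def IsFiltLT (F : Set LindTarski) : Prop :=
  F.Nonempty ∧ (∀ a b : LindTarski, a ∈ F → leLT a b → b ∈ F) ∧
    (∀ a b : LindTarski, a ∈ F → b ∈ F → meetLT a b ∈ F)

/-- An ideal of `A_L`: nonempty, downward closed, closed under binary joins. -/
def IsIdlLT (J : Set LindTarski) : Prop :=
  J.Nonempty ∧ (∀ a b : LindTarski, a ∈ J → leLT b a → b ∈ J) ∧
    (∀ a b : LindTarski, a ∈ J → b ∈ J → joinLT a b ∈ J)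

/-- States of the canonical frame: disjoint filter-ideal pairs of `A_L`. -/
def CState : Type :=
  {z : Set LindTarski × Set LindTarski // IsFiltLT z.1 ∧ IsIdlLT z.2 ∧ z.1 ∩ z.2 = ∅}

/-- `z E z'` iff `F_z ∩ J_{z'} = ∅`. -/
def Ec : CState → CState → Prop := fun z z' => z.val.1 ∩ z'.val.2 = ∅

/-- `z R_□ z'` iff `F_z ∩ {□u | u ∈ J_{z'}} = ∅`. -/
def Rbc : CState → CState → Prop := fun z z' => z.val.1 ∩ (boxLT '' z'.val.2) = ∅

/-- `z R_◇ z'` iff `J_z ∩ {◇u | u ∈ F_{z'}} = ∅`. -/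
def Rdc : CState → CState → Prop := fun z z' => z.val.2 ∩ (diaLT '' z'.val.1) = ∅

/-- The canonical valuation `V(p) = ({z | [p] ∈ F_z}, {z | [p] ∈ J_z})`. -/
def Vc : ℕ → Set CState × Set CState :=
  fun n => ({z | Quotient.mk fmSetoid (Fm.var n) ∈ z.val.1},
            {z | Quotient.mk fmSetoid (Fm.var n) ∈ z.val.2})


/- ### Auxiliary derivations -/

theorem derivBot (ψ : Fm) : Deriv .bot ψ := by
  simpa [sub1] using Deriv.subst 0 ψ Deriv.axBot

theorem derivTop (φ : Fm) : Deriv φ .top := by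
  simpa [sub1] using Deriv.subst 0 φ Deriv.axTop

/- ### Basic facts about `A_L` -/

theorem leLT_refl (a : LindTarski) : leLT a a :=
  Quotient.inductionOn a fun φ => derivRefl φ

theorem leLT_trans {a b c : LindTarski} (h1 : leLT a b) (h2 : leLT b c) : leLT a c := by
  revert h1 h2
  exact Quotient.inductionOn₃ a b c (fun φ χ ψ h1 h2 => Deriv.cut h1 h2)

theorem leLT_meet1 (a b : LindTarski) : leLT (meetLT a b) a :=
  Quotient.inductionOn₂ a b fun φ ψ => derivProj1 φ ψ

theorem leLT_meet2 (a b : LindTarski) : leLT (meetLT a b) b :=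
  Quotient.inductionOn₂ a b fun φ ψ => derivProj2 φ ψ

theorem leLT_join1 (a b : LindTarski) : leLT a (joinLT a b) :=
  Quotient.inductionOn₂ a b fun φ ψ => derivInj1 φ ψ

theorem leLT_join2 (a b : LindTarski) : leLT b (joinLT a b) :=
  Quotient.inductionOn₂ a b fun φ ψ => derivInj2 φ ψ

theorem boxLT_mono {a b : LindTarski} (h : leLT a b) : leLT (boxLT a) (boxLT b) := by
  revert h
  exact Quotient.inductionOn₂ a b (fun φ ψ h => Deriv.monoBox h)

theorem diaLT_mono {a b : LindTarski} (h : leLT a b) : leLT (diaLT a) (diaLT b) := by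
  revert h
  exact Quotient.inductionOn₂ a b (fun φ ψ h => Deriv.monoDia h)

theorem botLT_le (a : LindTarski) : leLT (Quotient.mk fmSetoid Fm.bot) a :=
  Quotient.inductionOn a fun φ => derivBot φ

theorem le_topLT (a : LindTarski) : leLT a (Quotient.mk fmSetoid Fm.top) :=
  Quotient.inductionOn a fun φ => derivTop φ

/- ### Principal filters and ideals -/

def pFilt (a : LindTarski) : Set LindTarski := {b | leLT a b}

def pIdl (a : LindTarski) : Set LindTarski := {b | leLT b a}

theorem pFilt_isFilt (a : LindTarski) : IsFiltLT (pFilt a) :=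
  ⟨⟨a, leLT_refl a⟩, fun _ _ hb hbc => leLT_trans hb hbc,
   fun b c hb hc => Quotient.inductionOn₃ a b c
     (fun _ _ _ h1 h2 => Deriv.andIntro h1 h2) hb hc⟩

theorem pIdl_isIdl (a : LindTarski) : IsIdlLT (pIdl a) :=
  ⟨⟨a, leLT_refl a⟩, fun _ _ hb hcb => leLT_trans hcb hb,
   fun b c hb hc => Quotient.inductionOn₃ a b c
     (fun _ _ _ h1 h2 => Deriv.orElim h1 h2) hb hc⟩

/- ### Constructions of canonical states -/

def mkState1 (a : LindTarski) (J : Set LindTarski) (hJ : IsIdlLT J) (ha : a ∉ J) : CState :=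
  ⟨(pFilt a, J), pFilt_isFilt a, hJ, by
    apply Set.eq_empty_iff_forall_notMem.mpr
    rintro c ⟨hc1, hc2⟩
    exact ha (hJ.2.1 c a hc2 hc1)⟩

def mkState2 (a : LindTarski) (F : Set LindTarski) (hF : IsFiltLT F) (ha : a ∉ F) : CState :=
  ⟨(F, pIdl a), hF, pIdl_isIdl a, by
    apply Set.eq_empty_iff_forall_notMem.mpr
    rintro c ⟨hc1, hc2⟩
    exact ha (hF.2.1 c a hc1 hc2)⟩

def mkState3 (a b : LindTarski) (h : ¬ leLT a b) : CState :=
  ⟨(pFilt a, pIdl b), pFilt_isFilt a, pIdl_isIdl b, by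
    apply Set.eq_empty_iff_forall_notMem.mpr
    rintro c ⟨hc1, hc2⟩
    exact h (leLT_trans hc1 hc2)⟩

/- ### Membership facts for canonical states -/

theorem state_disj (z : CState) {a : LindTarski} (h1 : a ∈ z.val.1) (h2 : a ∈ z.val.2) : False :=
  Set.eq_empty_iff_forall_notMem.mp z.prop.2.2 a ⟨h1, h2⟩

theorem filt_top (z : CState) : Quotient.mk fmSetoid Fm.top ∈ z.val.1 := by
  obtain ⟨a, ha⟩ := z.prop.1.1
  exact z.prop.1.2.1 a _ ha (le_topLT a)

theorem idl_bot (z : CState) : Quotient.mk fmSetoid Fm.bot ∈ z.val.2 := by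
  obtain ⟨a, ha⟩ := z.prop.2.1.1
  exact z.prop.2.1.2.1 a _ ha (botLT_le a)

theorem filt_bot_not (z : CState) : Quotient.mk fmSetoid Fm.bot ∉ z.val.1 := by
  intro h
  obtain ⟨a, ha⟩ := z.prop.2.1.1
  exact state_disj z (z.prop.1.2.1 _ a h (botLT_le a)) ha

theorem idl_top_not (z : CState) : Quotient.mk fmSetoid Fm.top ∉ z.val.2 := by
  intro h
  obtain ⟨a, ha⟩ := z.prop.1.1
  exact state_disj z ha (z.prop.2.1.2.1 _ a h (le_topLT a))

theorem mem_filt_conj (z : CState) (φ ψ : Fm) :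
    Quotient.mk fmSetoid (Fm.conj φ ψ) ∈ z.val.1 ↔
      Quotient.mk fmSetoid φ ∈ z.val.1 ∧ Quotient.mk fmSetoid ψ ∈ z.val.1 := by
  constructor
  · intro h
    exact ⟨z.prop.1.2.1 _ _ h
      (leLT_meet1 (Quotient.mk fmSetoid φ) (Quotient.mk fmSetoid ψ)),
     z.prop.1.2.1 _ _ h
      (leLT_meet2 (Quotient.mk fmSetoid φ) (Quotient.mk fmSetoid ψ))⟩
  · rintro ⟨h1, h2⟩
    exact z.prop.1.2.2 _ _ h1 h2

theorem mem_idl_disj (z : CState) (φ ψ : Fm) :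
    Quotient.mk fmSetoid (Fm.disj φ ψ) ∈ z.val.2 ↔
      Quotient.mk fmSetoid φ ∈ z.val.2 ∧ Quotient.mk fmSetoid ψ ∈ z.val.2 := by
  constructor
  · intro h
    exact ⟨z.prop.2.1.2.1 _ _ h
      (leLT_join1 (Quotient.mk fmSetoid φ) (Quotient.mk fmSetoid ψ)),
     z.prop.2.1.2.1 _ _ h
      (leLT_join2 (Quotient.mk fmSetoid φ) (Quotient.mk fmSetoid ψ))⟩
  · rintro ⟨h1, h2⟩
    exact z.prop.2.1.2.2 _ _ h1 h2

/- ### The key separation lemmas -/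

theorem idl_mem_iff (z : CState) (a : LindTarski) :
    (∀ z' : CState, Ec z' z → a ∉ z'.val.1) ↔ a ∈ z.val.2 := by
  constructor
  · intro h
    by_contra ha
    exact h (mkState1 a z.val.2 z.prop.2.1 ha) (mkState1 a z.val.2 z.prop.2.1 ha).prop.2.2
      (leLT_refl a)
  · intro h z' hE ha
    exact Set.eq_empty_iff_forall_notMem.mp hE a ⟨ha, h⟩

theorem filt_mem_iff (z : CState) (a : LindTarski) :
    (∀ z' : CState, Ec z z' → a ∉ z'.val.2) ↔ a ∈ z.val.1 := by
  constructor
  · intro h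
    by_contra ha
    exact h (mkState2 a z.val.1 z.prop.1 ha) (mkState2 a z.val.1 z.prop.1 ha).prop.2.2
      (leLT_refl a)
  · intro h z' hE ha
    exact Set.eq_empty_iff_forall_notMem.mp hE a ⟨h, ha⟩

theorem box_filt_iff (z : CState) (φ : Fm) :
    (∀ z' : CState, Rbc z z' → Quotient.mk fmSetoid φ ∉ z'.val.2) ↔
      Quotient.mk fmSetoid (Fm.box φ) ∈ z.val.1 := by
  constructor
  · intro h
    by_contra hnb
    by_cases htop : leLT (Quotient.mk fmSetoid Fm.top) (Quotient.mk fmSetoid φ)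
    · exact hnb (z.prop.1.2.1 _ _ (filt_top z)
        (Deriv.cut Deriv.axBoxTop (Deriv.monoBox htop)))
    · refine h (mkState3 _ _ htop) ?_ (leLT_refl (Quotient.mk fmSetoid φ))
      apply Set.eq_empty_iff_forall_notMem.mpr
      rintro c ⟨hc1, b, hb, rfl⟩
      have hb' : leLT b (Quotient.mk fmSetoid φ) := hb
      exact hnb (z.prop.1.2.1 _ _ hc1 (boxLT_mono hb'))
  · intro h z' hR hφ
    exact Set.eq_empty_iff_forall_notMem.mp hR _ ⟨h, ⟨_, hφ, rfl⟩⟩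

theorem dia_idl_iff (z : CState) (φ : Fm) :
    (∀ z' : CState, Rdc z z' → Quotient.mk fmSetoid φ ∉ z'.val.1) ↔
      Quotient.mk fmSetoid (Fm.dia φ) ∈ z.val.2 := by
  constructor
  · intro h
    by_contra hnd
    by_cases hbot : leLT (Quotient.mk fmSetoid φ) (Quotient.mk fmSetoid Fm.bot)
    · exact hnd (z.prop.2.1.2.1 _ _ (idl_bot z)
        (Deriv.cut (Deriv.monoDia hbot) Deriv.axDiaBot))
    · refine h (mkState3 _ _ hbot) ?_ (leLT_refl (Quotient.mk fmSetoid φ))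
      apply Set.eq_empty_iff_forall_notMem.mpr
      rintro c ⟨hc1, b, hb, rfl⟩
      have hb' : leLT (Quotient.mk fmSetoid φ) b := hb
      exact hnd (z.prop.2.1.2.1 _ _ hc1 (diaLT_mono hb'))
  · intro h z' hR hφ
    exact Set.eq_empty_iff_forall_notMem.mp hR _ ⟨h, ⟨_, hφ, rfl⟩⟩

/-- Truth lemma for the canonical model: satisfaction equals membership of `[φ]` in the
filter part, and co-satisfaction equals membership of `[φ]` in the ideal part. -/
theorem stmt8 (φ : Fm) (z : CState) :
    ((sat Ec Rbc Rdc Vc φ).1 z ↔ Quotient.mk fmSetoid φ ∈ z.val.1) ∧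
    ((sat Ec Rbc Rdc Vc φ).2 z ↔ Quotient.mk fmSetoid φ ∈ z.val.2) := by
  induction φ generalizing z with
  | bot =>
      simp only [sat]
      exact ⟨⟨fun h => h.elim, fun h => filt_bot_not z h⟩,
             ⟨fun _ => idl_bot z, fun _ => trivial⟩⟩
  | top =>
      simp only [sat]
      exact ⟨⟨fun _ => filt_top z, fun _ => trivial⟩,
             ⟨fun h => h.elim, fun h => idl_top_not z h⟩⟩
  | var n =>
      simp only [sat, Vc, Set.mem_setOf_eq]
      exact ⟨trivial, idl_mem_iff z _⟩
  | conj φ ψ ihφ ihψ =>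
      simp only [sat]
      constructor
      · rw [(ihφ z).1, (ihψ z).1, ← mem_filt_conj]
      · simp only [ihφ, ihψ, ← mem_filt_conj]
        exact idl_mem_iff z _
  | disj φ ψ ihφ ihψ =>
      simp only [sat]
      constructor
      · simp only [ihφ, ihψ, ← mem_idl_disj]
        exact filt_mem_iff z _
      · rw [(ihφ z).2, (ihψ z).2, ← mem_idl_disj]
  | box φ ih =>
      have h1 : ∀ w : CState,
          (∀ z', Rbc w z' → ¬ (sat Ec Rbc Rdc Vc φ).2 z') ↔
            Quotient.mk fmSetoid (Fm.box φ) ∈ w.val.1 := by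
        intro w
        simp only [ih]
        exact box_filt_iff w φ
      simp only [sat]
      refine ⟨h1 z, ?_⟩
      simp only [h1]
      exact idl_mem_iff z _
  | dia φ ih =>
      have h2 : ∀ w : CState,
          (∀ z', Rdc w z' → ¬ (sat Ec Rbc Rdc Vc φ).1 z') ↔
            Quotient.mk fmSetoid (Fm.dia φ) ∈ w.val.2 := by
        intro w
        simp only [ih]
        exact dia_idl_iff w φ
      simp only [sat]
      refine ⟨?_, h2 z⟩
      simp only [h2]
      exact filt_mem_iff z _
end

section
/- Correspondence for factivity: for any graph-based L-frame F = (Z,E,R_□,R_◇), the sequent □p ⊢ p is valid in F if and only if E ⊆ R_□. -/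
/-- Correspondence for factivity: `□p ⊢ p` is valid in `F` iff `E ⊆ R_□`. -/
theorem stmt10 {Z : Type*} (F : GFrame Z) :
    validIn F (.box (.var 0)) (.var 0) ↔ ∀ a x : Z, F.E a x → F.Rb a x := by
  constructor
  · intro hv a x hEax
    by_contra hRb
    -- valuation: ⟦p⟧ = {z | ¬ E z x}
    set B : Set Z := rZero F.E {x} with hB
    have hBx : B = {z | ¬ F.E z x} := by
      ext u; simp [hB, rZero]
    set V : ℕ → Set Z × Set Z := fun _ => (B, rOne F.E B) with hV
    have hconc : ∀ n, isConcept F.E (V n) := by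
      intro n
      constructor
      · rfl
      · ext u
        constructor
        · intro hu v hv'
          exact hv' u hu
        · intro hu v hv'
          have hvx : v = x := hv'
          rw [hvx]
          have hx : x ∈ rOne F.E B := by
            intro u' hu'
            simpa [hBx] using hu'
          exact hu x hx
    have hsat : (sat F.E F.Rb F.Rd V (.box (.var 0))).1 a := by
      intro z' hRz' hall
      -- hall : ∀ z'', E z'' z' → z'' ∉ B, i.e. E z'' z' → E z'' x
      -- use compatibility of Rb (second clause) with b = a
      have hz' : z' ∉ rOne F.Rb {a} := by
        intro h
        exact h a rfl hRz'
      have hz'2 : z' ∉ rOne F.E (rZero F.E (rOne F.Rb {a})) := fun h =>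
        hz' (F.compatB.2 a h)
      simp only [rOne, Set.mem_setOf_eq, not_forall] at hz'2
      obtain ⟨u, hu, hEuz'⟩ := hz'2
      push_neg at hEuz'
      have hux : ¬ F.E u x := hu x (by intro u0 hu0; have : u0 = a := hu0; subst this; exact hRb)
      have : u ∉ B := hall u hEuz'
      rw [hBx] at this
      exact this hux
    have hcosat : (sat F.E F.Rb F.Rd V (.var 0)).2 x := by
      intro z' hEz'x hz'B
      rw [show (V 0).1 = B from rfl, hBx] at hz'B
      exact hz'B hEz'x
    exact hv V hconc a x hsat hcosat hEax
  · intro h V _ z z' hz hz' hE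
    exact hz z' (h z z' hE) hz'
end

section
/- Correspondence for positive introspection: for any graph-based L-frame F = (Z,E,R_□,R_◇), the sequent □p ⊢ □□p is valid in F if and only if R_□ •_E R_□ ⊆ R_□ (R_□ is E_•-transitive). -/
/-- `x (R ∘_E S) a` iff there is `b` with `x R b` and `{y | b E y} ⊆ {u | u S a}`. -/
def circComp {Z : Type*} (E R S : Z → Z → Prop) : Z → Z → Prop :=
  fun x a => ∃ b : Z, R x b ∧ ∀ y : Z, E b y → S y a

/-- `a (R •_E S) x` iff there is `y` with `a R y` and `{u | u E y} ⊆ {u | u S x}`. -/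
def bulletComp {Z : Type*} (E R S : Z → Z → Prop) : Z → Z → Prop :=
  fun a x => ∃ y : Z, R a y ∧ ∀ u : Z, E u y → S u x

/-- From the second compatibility clause: if `R b v` then there is `u` with `E u v`
whose every `E`-successor is an `R`-successor of `b`. -/
lemma compat_star {Z : Type*} {E R : Z → Z → Prop} (hc : ECompat E R) {b v : Z}
    (h : R b v) : ∃ u, E u v ∧ ∀ w, E u w → R b w := by
  by_contra hno
  push_neg at hno
  have hv : v ∈ rOne E (rZero E (rOne R {b})) := by
    intro u hu hEuv
    obtain ⟨w, hEuw, hnRbw⟩ := hno u hEuv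
    exact hu w (fun t ht => by simp only [Set.mem_singleton_iff] at ht; subst t; exact hnRbw)
      hEuw
  exact hc.2 b hv b rfl h

/-- From the first compatibility clause: if `R b y` then there is `m` with `E b m`
whose every `E`-predecessor is `R`-related to `y`. -/
lemma compat_dstar {Z : Type*} {E R : Z → Z → Prop} (hc : ECompat E R) {b y : Z}
    (h : R b y) : ∃ m, E b m ∧ ∀ t, E t m → R t y := by
  by_contra hno
  push_neg at hno
  have hb : b ∈ rZero E (rOne E (rZero R {y})) := by
    intro m hm hEbm
    obtain ⟨t, hEtm, hnRty⟩ := hno m hEbm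
    exact hm t (fun v hv => by simp only [Set.mem_singleton_iff] at hv; subst v; exact hnRty)
      hEtm
  exact hc.1 y hb y rfl h

/-- Correspondence for positive introspection: `□p ⊢ □□p` is valid in `F` iff
`R_□ •_E R_□ ⊆ R_□`. -/
theorem stmt12 {Z : Type*} (F : GFrame Z) :
    validIn F (.box (.var 0)) (.box (.box (.var 0))) ↔
      ∀ a x : Z, bulletComp F.E F.Rb F.Rb a x → F.Rb a x := by
  constructor
  · -- validity implies E-bullet-transitivity
    intro hval a x ⟨y, hay, hyx⟩
    classical
    -- the "minimal valuation": A = {t | every E-successor of t is an Rb-successor of a}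
    set A : Set Z := {t | ∀ w, F.E t w → F.Rb a w} with hA
    set V : ℕ → Set Z × Set Z := fun _ => (A, rOne F.E A) with hV
    have hconc : ∀ n, isConcept F.E (V n) := by
      intro n
      refine ⟨rfl, ?_⟩
      ext t
      constructor
      · intro ht m hm
        -- ht : t ∈ A, hm : m ∈ rOne E A; goal: ¬ E t m
        exact hm t ht
      · intro ht w hEtw
        by_contra hnR
        have hw : w ∈ rOne F.E A := by
          intro s hs hEsw
          exact hnR (hs w hEsw)
        exact ht w hw hEtw
    have htrue := hval V hconc
    -- a satisfies □p
    have hsat1a : (sat F.E F.Rb F.Rd V (.box (.var 0))).1 a := by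
      intro v hav hsp2
      obtain ⟨u, hEuv, hu⟩ := compat_star F.compatB hav
      exact hsp2 u hEuv hu
    -- a ∈ C^{10} where C = {w | w ⊩ □□p}
    have hC10 : ∀ m, (∀ w, (sat F.E F.Rb F.Rd V (.box (.box (.var 0)))).1 w → ¬ F.E w m) →
        ¬ F.E a m := by
      intro m hm hEam
      exact htrue a m hsat1a (fun w hEwm hw => hm w hw hEwm) hEam
    -- hence a ⊩ □□p, by compatibility (clause 1) of Rb
    have hbb : (sat F.E F.Rb F.Rd V (.box (.box (.var 0)))).1 a := by
      intro v hav hsp2v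
      have ha : a ∈ rZero F.Rb {v} := by
        apply F.compatB.1 v
        intro m hm hEam
        refine hC10 m ?_ hEam
        intro w hw hEwm
        refine hm w ?_ hEwm
        intro v' hv'
        simp only [Set.mem_singleton_iff] at hv'
        subst v'
        intro hRwv
        exact hw v hRwv hsp2v
      exact ha v rfl hav
    -- instantiate at y, then use the bullet witness
    have hy := hbb y hay
    -- hy : ¬ (sat □p).2 y, i.e. some u with E u y satisfies □p
    simp only [sat, not_forall, not_not, not_exists] at hy
    obtain ⟨u, hEuy, hsat1u⟩ := hy
    have hRux : F.Rb u x := hyx u hEuy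
    have hx := hsat1u x hRux
    obtain ⟨t, hEtx, htA⟩ := hx
    exact htA x hEtx
  · -- E-bullet-transitivity implies validity
    intro htrans V _ z z' h1 h2 hE
    refine h2 z hE ?_
    intro v hzv hsp2
    obtain ⟨u, hEuv, hu⟩ := compat_star F.compatB hzv
    refine hsp2 u hEuv ?_
    intro w' hRuw' hsp2'
    obtain ⟨m, hEum, hm⟩ := compat_dstar F.compatB hRuw'
    have hzw' : F.Rb z w' := htrans z w' ⟨m, hu m hEum, hm⟩
    exact h1 w' hzw' hsp2'
end
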